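/- arXiv:2405.19786 — 3 statements merged into one kernel-verified Lean document; each statement's English description precedes it below -/
import Mathlib

section
/- Let N ≥ 2 and 1 < p < N. For all radii 0 < r₁ < r₂ < R, the inequality (R/r₁)^((N-p)/(p-1)) ≥ (1 + (N-p)/(N(p-1)))·(R/r₂)^((N-p)/(p-1)) − ((N-p)/(N(p-1)))·(R/r₂)^((N-p)/(p-1))·(r₁/r₂)^N holds. -/
open MeasureTheory Filter
open scoped ENNReal

noncomputable section

/-- Algebraic inequality equivalent to the quantified monotonicity of the relative
`p`-capacity of concentric balls, for `1 < p < N` and `0 < r₁ < r₂ < R`. -/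
theorem capacity_monotonicity_algebraic (N : ℕ) (p r₁ r₂ R : ℝ)
    (hN : 2 ≤ N) (hp1 : 1 < p) (hpN : p < N)
    (h1 : 0 < r₁) (h2 : r₁ < r₂) (h3 : r₂ < R) :
    (1 + ((N:ℝ) - p) / (N * (p - 1))) * (R / r₂) ^ (((N:ℝ) - p) / (p - 1))
      - (((N:ℝ) - p) / (N * (p - 1))) * (R / r₂) ^ (((N:ℝ) - p) / (p - 1)) * (r₁ / r₂) ^ (N:ℝ)
      ≤ (R / r₁) ^ (((N:ℝ) - p) / (p - 1)) := by
  have hN2 : (2:ℝ) ≤ (N:ℝ) := by exact_mod_cast hN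
  set α : ℝ := ((N:ℝ) - p) / ((N:ℝ) * (p - 1)) with hα
  have hp0 : 0 < p - 1 := by linarith
  have hNp : 0 < (N:ℝ) - p := by linarith
  have hNpos : (0:ℝ) < (N:ℝ) := by linarith
  have hαpos : 0 < α := div_pos hNp (mul_pos hNpos hp0)
  have h0r2 : 0 < r₂ := h1.trans h2
  have hR : 0 < R := h0r2.trans h3
  set u : ℝ := (r₂ / r₁) ^ (N:ℝ) with hu
  have hupos : 0 < u := Real.rpow_pos_of_pos (div_pos h0r2 h1) _
  have hu1 : 1 < u := by
    have hbase : 1 < r₂ / r₁ := (one_lt_div h1).mpr h2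
    calc (1:ℝ) = 1 ^ (N:ℝ) := (Real.one_rpow _).symm
    _ < u := Real.rpow_lt_rpow (by norm_num) hbase hNpos
  -- Bernoulli
  have hbern : 1 + (1 + α) * (u - 1) ≤ u ^ (1 + α) := by
    have := one_add_mul_self_le_rpow_one_add (s := u - 1) (by linarith) (p := 1 + α) (by linarith)
    simpa using this
  have hupow : u ^ (1 + α) = u * u ^ α := by
    rw [Real.rpow_add hupos, Real.rpow_one]
  have hkey : 1 + α - α / u ≤ u ^ α := by
    have heq : 1 + α - α / u = ((1 + α) * u - α) / u := by field_simp
    rw [heq, div_le_iff₀ hupos]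
    nlinarith [hbern, hupow]
  set s' : ℝ := (R / r₂) ^ (((N:ℝ) - p) / (p - 1)) with hs'
  have hs'pos : 0 < s' := Real.rpow_pos_of_pos (div_pos hR h0r2) _
  -- (r₁/r₂)^N = 1/u
  have hinv : (r₁ / r₂) ^ (N:ℝ) = u⁻¹ := by
    rw [hu, ← Real.inv_rpow (div_pos h0r2 h1).le, inv_div]
  -- s' * u^α = (R/r₁)^β
  have hprod : s' * u ^ α = (R / r₁) ^ (((N:ℝ) - p) / (p - 1)) := by
    have hua : u ^ α = (r₂ / r₁) ^ (((N:ℝ) - p) / (p - 1)) := by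
      rw [hu, ← Real.rpow_mul (div_pos h0r2 h1).le]
      congr 1
      field_simp [hα]
      have hαN : α * ((N:ℝ) * (p - 1)) = (N:ℝ) - p := by
        rw [hα]; exact div_mul_cancel₀ _ (mul_pos hNpos hp0).ne'
      linear_combination hαN
    rw [hua, hs', ← Real.mul_rpow (div_pos hR h0r2).le (div_pos h0r2 h1).le]
    congr 1
    field_simp
  calc (1 + α) * s' - α * s' * (r₁ / r₂) ^ (N:ℝ)
      = s' * (1 + α - α / u) := by rw [hinv]; field_simp
    _ ≤ s' * u ^ α := by nlinarith [hkey, hs'pos]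
    _ = (R / r₁) ^ (((N:ℝ) - p) / (p - 1)) := hprod
end
end

section
/- Let N ≥ 2, 1 < p < N, and define cap_p(r, R) = N·ω_N·((N-p)/(p-1))^(p-1)·r^(N-p)/(1 − (r/R)^((N-p)/(p-1)))^(p-1) for 0 < r < R, where ω_N is the volume of the unit ball. Then for 0 < r₁ < r₂ < R: (ω_N·(r₂^N − r₁^N))/(N·ω_N·r₂^(N-1))^(p/(p-1)) + (1/cap_p(r₂, R))^(1/(p-1)) ≤ (1/cap_p(r₁, R))^(1/(p-1)). -/
open MeasureTheory Filter
open scoped ENNReal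

noncomputable section

/-- The volume of the unit ball in `ℝ^N`. -/
noncomputable def omegaN (N : ℕ) : ℝ :=
  (volume (Metric.ball (0 : EuclideanSpace ℝ (Fin N)) 1)).toReal

/-- Explicit formula for the `p`-capacity (`1 < p < N`) of `closedBall 0 r`
relative to the concentric ball of radius `R`. -/
noncomputable def capBallSub (N : ℕ) (p r R : ℝ) : ℝ :=
  N * omegaN N * (((N:ℝ) - p) / (p - 1)) ^ (p - 1) * r ^ ((N:ℝ) - p) /
    (1 - (r / R) ^ (((N:ℝ) - p) / (p - 1))) ^ (p - 1)

lemma omegaN_pos (N : ℕ) : 0 < omegaN N :=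
  ENNReal.toReal_pos (Metric.measure_ball_pos volume _ one_pos).ne' measure_ball_lt_top.ne

lemma key_convex (t α c : ℝ) (ht : 0 < t) (hα : 0 < α) (hc : 0 < c) :
    c + α ≤ c * t ^ (-α) + α * t ^ c := by
  have hca : 0 < c + α := by linarith
  have h := convexOn_exp.2 (Set.mem_univ (-α * Real.log t)) (Set.mem_univ (c * Real.log t))
    (by positivity : (0:ℝ) ≤ c / (c + α)) (by positivity : (0:ℝ) ≤ α / (c + α))
    (by field_simp)
  simp only [smul_eq_mul] at h
  have e0 : c / (c + α) * (-α * Real.log t) + α / (c + α) * (c * Real.log t) = 0 := by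
    field_simp; ring
  rw [e0, Real.exp_zero] at h
  rw [Real.rpow_def_of_pos ht, Real.rpow_def_of_pos ht]
  have h2 := mul_le_mul_of_nonneg_left h hca.le
  have e1 : (c+α) * (c / (c + α) * Real.exp (-α * Real.log t) + α / (c + α) * Real.exp (c * Real.log t))
      = c * Real.exp (Real.log t * -α) + α * Real.exp (Real.log t * c) := by
    field_simp
  rw [e1, mul_one] at h2
  exact h2

lemma capInv (N : ℕ) (p r R : ℝ) (hp1 : 1 < p) (hpN : p < N) (hr : 0 < r) (hrR : r < R) :
    (1 / capBallSub N p r R) ^ (1 / (p-1)) =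
      (r ^ (-(((N:ℝ)-p)/(p-1))) - R ^ (-(((N:ℝ)-p)/(p-1)))) /
        ((N * omegaN N) ^ (1/(p-1)) * (((N:ℝ)-p)/(p-1))) := by
  have hq : (0:ℝ) < p - 1 := by linarith
  have hα : (0:ℝ) < ((N:ℝ)-p)/(p-1) := div_pos (by linarith) hq
  have hw : 0 < omegaN N := omegaN_pos N
  have hNpos : (0:ℝ) < N := by linarith
  have hR : (0:ℝ) < R := hr.trans hrR
  have hbase : (0:ℝ) < 1 - (r/R) ^ (((N:ℝ)-p)/(p-1)) := by
    have := Real.rpow_lt_one (le_of_lt (div_pos hr hR)) ((div_lt_one hR).2 hrR) hα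
    linarith
  rw [capBallSub, one_div_div,
    Real.div_rpow (by positivity) (by positivity),
    one_div (p-1), Real.rpow_rpow_inv hbase.le hq.ne',
    Real.mul_rpow (by positivity) (by positivity),
    Real.mul_rpow (by positivity) (by positivity),
    Real.rpow_rpow_inv hα.le hq.ne',
    ← Real.rpow_mul hr.le]
  rw [Real.div_rpow hr.le hR.le, Real.rpow_neg hr.le, Real.rpow_neg hR.le]
  have h1 : r ^ (((N:ℝ)-p) * (p-1)⁻¹) = r ^ (((N:ℝ)-p)/(p-1)) := by
    rw [div_eq_mul_inv]
  rw [h1]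
  have hra : (0:ℝ) < r ^ (((N:ℝ)-p)/(p-1)) := Real.rpow_pos_of_pos hr _
  have hRa : (0:ℝ) < R ^ (((N:ℝ)-p)/(p-1)) := Real.rpow_pos_of_pos hR _
  have hE : (0:ℝ) < ((N:ℝ) * omegaN N) ^ (p-1)⁻¹ := Real.rpow_pos_of_pos (by positivity) _
  field_simp

/-- Quantified monotonicity of the relative `p`-capacity of concentric balls,
with a geometric remainder term, in the subconformal range `1 < p < N`. -/
theorem capacity_monotonicity_subconformal (N : ℕ) (p r₁ r₂ R : ℝ)
    (hN : 2 ≤ N) (hp1 : 1 < p) (hpN : p < N)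
    (h1 : 0 < r₁) (h2 : r₁ < r₂) (h3 : r₂ < R) :
    omegaN N * (r₂ ^ (N:ℝ) - r₁ ^ (N:ℝ)) / (N * omegaN N * r₂ ^ ((N:ℝ) - 1)) ^ (p / (p - 1))
      + (1 / capBallSub N p r₂ R) ^ (1 / (p - 1))
      ≤ (1 / capBallSub N p r₁ R) ^ (1 / (p - 1)) := by
  have hq : (0:ℝ) < p - 1 := by linarith
  have hα : (0:ℝ) < ((N:ℝ)-p)/(p-1) := div_pos (by linarith) hq
  have hw : 0 < omegaN N := omegaN_pos N
  have hNpos : (0:ℝ) < N := by positivity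
  have hr₂ : 0 < r₂ := h1.trans h2
  set α := ((N:ℝ)-p)/(p-1) with hαdef
  set w := omegaN N with hwdef
  rw [capInv N p r₁ R hp1 hpN h1 (h2.trans h3), capInv N p r₂ R hp1 hpN hr₂ h3]
  have hE : (0:ℝ) < ((N:ℝ) * w) ^ (1/(p-1)) := Real.rpow_pos_of_pos (by positivity) _
  have hD : (0:ℝ) < ((N:ℝ) * w) ^ (1/(p-1)) * α := mul_pos hE hα
  suffices h : w * (r₂ ^ (N:ℝ) - r₁ ^ (N:ℝ)) / (↑N * w * r₂ ^ ((N:ℝ) - 1)) ^ (p / (p - 1))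
      ≤ (r₁ ^ (-α) - r₂ ^ (-α)) / (((N:ℝ) * w) ^ (1/(p-1)) * α) by
    have e : (r₁ ^ (-α) - R ^ (-α)) / (((N:ℝ) * w) ^ (1/(p-1)) * α)
        = (r₁ ^ (-α) - r₂ ^ (-α)) / (((N:ℝ) * w) ^ (1/(p-1)) * α)
          + (r₂ ^ (-α) - R ^ (-α)) / (((N:ℝ) * w) ^ (1/(p-1)) * α) := by ring
    rw [e]
    linarith
  -- rewrite denominator
  have e1 : p/(p-1) = 1 + 1/(p-1) := by field_simp; ring
  have e2 : ((N:ℝ)-1)*(p/(p-1)) = (N:ℝ) + α := by rw [hαdef]; field_simp; ring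
  have hden : ((N:ℝ) * w * r₂ ^ ((N:ℝ)-1)) ^ (p/(p-1))
      = ((N:ℝ) * w) * (((N:ℝ) * w) ^ (1/(p-1))) * (r₂ ^ (N:ℝ) * r₂ ^ α) := by
    rw [Real.mul_rpow (by positivity) (by positivity), ← Real.rpow_mul hr₂.le, e2,
      Real.rpow_add hr₂, e1, Real.rpow_add (by positivity), Real.rpow_one]
  rw [hden]
  have ha : (0:ℝ) < r₁ ^ α := Real.rpow_pos_of_pos h1 _
  have hb : (0:ℝ) < r₂ ^ α := Real.rpow_pos_of_pos hr₂ _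
  have hX : (0:ℝ) < r₁ ^ (N:ℝ) := Real.rpow_pos_of_pos h1 _
  have hY : (0:ℝ) < r₂ ^ (N:ℝ) := Real.rpow_pos_of_pos hr₂ _
  -- key convexity inequality
  have hkey := key_convex (r₁/r₂) α (N:ℝ) (div_pos h1 hr₂) hα hNpos
  rw [Real.rpow_neg (le_of_lt (div_pos h1 hr₂)), Real.div_rpow h1.le hr₂.le,
    Real.div_rpow h1.le hr₂.le] at hkey
  have hkey' : (N:ℝ) + α ≤ (N:ℝ) * (r₂ ^ α / r₁ ^ α) + α * (r₁ ^ (N:ℝ) / r₂ ^ (N:ℝ)) := by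
    rw [inv_div] at hkey; exact hkey
  have key2 : α * (r₂ ^ (N:ℝ) - r₁ ^ (N:ℝ)) * r₁ ^ α
      ≤ (N:ℝ) * r₂ ^ (N:ℝ) * (r₂ ^ α - r₁ ^ α) := by
    have h' := mul_le_mul_of_nonneg_right hkey' (le_of_lt (mul_pos ha hY))
    have e3 : ((N:ℝ) * (r₂ ^ α / r₁ ^ α) + α * (r₁ ^ (N:ℝ) / r₂ ^ (N:ℝ))) * (r₁ ^ α * r₂ ^ (N:ℝ))
        = (N:ℝ) * r₂ ^ α * r₂ ^ (N:ℝ) + α * r₁ ^ (N:ℝ) * r₁ ^ α := by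
      field_simp
      try ring
    rw [e3] at h'
    nlinarith [h']
  rw [Real.rpow_neg h1.le, Real.rpow_neg hr₂.le,
    div_le_div_iff₀ (by positivity) (by positivity)]
  have e4 : ((r₁ ^ α)⁻¹ - (r₂ ^ α)⁻¹) * ((N:ℝ) * w * ((N:ℝ) * w) ^ (1/(p-1)) * (r₂ ^ (N:ℝ) * r₂ ^ α))
      = (N:ℝ) * w * ((N:ℝ) * w) ^ (1/(p-1)) * r₂ ^ (N:ℝ) * ((r₂ ^ α - r₁ ^ α) / r₁ ^ α) := by
    field_simp
  rw [e4, ← sub_nonneg]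
  have h5 : (N:ℝ) * w * ((N:ℝ) * w) ^ (1/(p-1)) * r₂ ^ (N:ℝ) * ((r₂ ^ α - r₁ ^ α) / r₁ ^ α)
      - w * (r₂ ^ (N:ℝ) - r₁ ^ (N:ℝ)) * (((N:ℝ) * w) ^ (1/(p-1)) * α)
      = (w * ((N:ℝ) * w) ^ (1/(p-1)) / r₁ ^ α) *
        ((N:ℝ) * r₂ ^ (N:ℝ) * (r₂ ^ α - r₁ ^ α) - α * (r₂ ^ (N:ℝ) - r₁ ^ (N:ℝ)) * r₁ ^ α) := by
    field_simp
  rw [h5]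
  exact mul_nonneg (by positivity) (sub_nonneg.2 key2)
end
end

section
/- Let N ≥ 2 and define cap_N(r, R) = N·ω_N·(log(R/r))^(1-N) for 0 < r < R. Then for 0 < r₁ < r₂ < R: (ω_N·(r₂^N − r₁^N))/(N·ω_N·r₂^(N-1))^(N/(N-1)) + (1/cap_N(r₂, R))^(1/(N-1)) ≤ (1/cap_N(r₁, R))^(1/(N-1)). -/
open MeasureTheory Filter
open scoped ENNReal

noncomputable section

/-- Explicit formula for the conformal (`p = N`) capacity of `closedBall 0 r`
relative to the concentric ball of radius `R`. -/
noncomputable def capBallConf (N : ℕ) (r R : ℝ) : ℝ :=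
  N * omegaN N * (Real.log (R / r)) ^ ((1:ℝ) - N)

/-- Quantified monotonicity of the relative capacity of concentric balls,
with a geometric remainder term, in the conformal case `p = N`. -/
theorem capacity_monotonicity_conformal (N : ℕ) (r₁ r₂ R : ℝ)
    (hN : 2 ≤ N) (h1 : 0 < r₁) (h2 : r₁ < r₂) (h3 : r₂ < R) :
    omegaN N * (r₂ ^ (N:ℝ) - r₁ ^ (N:ℝ)) / (N * omegaN N * r₂ ^ ((N:ℝ) - 1)) ^ ((N:ℝ) / ((N:ℝ) - 1))
      + (1 / capBallConf N r₂ R) ^ (1 / ((N:ℝ) - 1))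
      ≤ (1 / capBallConf N r₁ R) ^ (1 / ((N:ℝ) - 1)) := by
  have hω : 0 < omegaN N := by
    unfold omegaN
    refine ENNReal.toReal_pos ?_ ?_
    · exact (Metric.measure_ball_pos volume 0 one_pos).ne'
    · exact (MeasureTheory.measure_ball_lt_top).ne
  set ω := omegaN N with hωdef
  have hNR : (2:ℝ) ≤ (N:ℝ) := by exact_mod_cast hN
  have hNpos : (0:ℝ) < N := by linarith
  have hN1 : (0:ℝ) < (N:ℝ) - 1 := by linarith
  have hN1ne : ((N:ℝ) - 1) ≠ 0 := hN1.ne'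
  have hNω : (0:ℝ) < (N:ℝ) * ω := by positivity
  have h2pos : 0 < r₂ := h1.trans h2
  have hR : 0 < R := h2pos.trans h3
  set a : ℝ := ((N:ℝ) * ω) ^ (1 / ((N:ℝ) - 1)) with ha
  have hapos : 0 < a := Real.rpow_pos_of_pos hNω _
  -- value of the capacity terms
  have capval : ∀ r : ℝ, 0 < r → r < R →
      (1 / capBallConf N r R) ^ (1 / ((N:ℝ) - 1)) = Real.log (R / r) / a := by
    intro r hr hrR
    have hlog : 0 < Real.log (R / r) := Real.log_pos ((one_lt_div hr).mpr hrR)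
    have hcap : capBallConf N r R = ((N:ℝ) * ω) * (Real.log (R / r)) ^ ((1:ℝ) - N) := rfl
    rw [hcap, one_div, mul_inv, ← Real.rpow_neg hlog.le, neg_sub]
    rw [Real.mul_rpow (by positivity) (by positivity)]
    rw [← Real.rpow_mul hlog.le]
    rw [mul_one_div, div_self hN1ne, Real.rpow_one]
    rw [← Real.rpow_neg_one ((N:ℝ) * ω), ← Real.rpow_mul hNω.le]
    rw [div_eq_mul_inv (Real.log (R/r)) a, mul_comm]
    congr 1
    rw [ha, ← Real.rpow_neg_one (((N:ℝ)*ω) ^ (1 / ((N:ℝ) - 1))), ← Real.rpow_mul hNω.le]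
    ring_nf
  -- value of the denominator
  have denval : ((N:ℝ) * ω * r₂ ^ ((N:ℝ) - 1)) ^ ((N:ℝ) / ((N:ℝ) - 1))
      = (N:ℝ) * ω * r₂ ^ (N:ℝ) * a := by
    rw [Real.mul_rpow hNω.le (Real.rpow_nonneg h2pos.le _), ← Real.rpow_mul h2pos.le]
    have e1 : ((N:ℝ) - 1) * ((N:ℝ) / ((N:ℝ) - 1)) = (N:ℝ) := by
      field_simp
    have e2 : (N:ℝ) / ((N:ℝ) - 1) = 1 + 1 / ((N:ℝ) - 1) := by
      field_simp
      ring
    rw [e1, e2, Real.rpow_add hNω, Real.rpow_one, ha]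
    ring
  rw [capval r₁ h1 (h2.trans h3), capval r₂ h2pos h3, denval]
  -- key inequality
  have ht : 0 < r₁ / r₂ := div_pos h1 h2pos
  have hlogkey : 1 - (r₁ / r₂) ^ (N:ℝ) ≤ (N:ℝ) * Real.log (r₂ / r₁) := by
    have := Real.log_le_sub_one_of_pos (Real.rpow_pos_of_pos ht (N:ℝ))
    rw [Real.log_rpow ht] at this
    have hlt : Real.log (r₁ / r₂) = - Real.log (r₂ / r₁) := by
      rw [Real.log_div h1.ne' h2pos.ne', Real.log_div h2pos.ne' h1.ne']; ring
    rw [hlt] at this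
    linarith
  have hdiv : (r₁ / r₂) ^ (N:ℝ) = r₁ ^ (N:ℝ) / r₂ ^ (N:ℝ) :=
    Real.div_rpow h1.le h2pos.le _
  have hr2N : 0 < r₂ ^ (N:ℝ) := Real.rpow_pos_of_pos h2pos _
  have key : ω * (r₂ ^ (N:ℝ) - r₁ ^ (N:ℝ)) / ((N:ℝ) * ω * r₂ ^ (N:ℝ))
      ≤ Real.log (r₂ / r₁) := by
    rw [div_le_iff₀ (by positivity)]
    have h' : r₂ ^ (N:ℝ) * (1 - (r₁ / r₂) ^ (N:ℝ)) ≤ r₂ ^ (N:ℝ) * ((N:ℝ) * Real.log (r₂ / r₁)) :=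
      mul_le_mul_of_nonneg_left hlogkey hr2N.le
    rw [hdiv] at h'
    have h'' : r₂ ^ (N:ℝ) - r₁ ^ (N:ℝ) ≤ r₂ ^ (N:ℝ) * ((N:ℝ) * Real.log (r₂ / r₁)) := by
      calc r₂ ^ (N:ℝ) - r₁ ^ (N:ℝ) = r₂ ^ (N:ℝ) * (1 - r₁ ^ (N:ℝ) / r₂ ^ (N:ℝ)) := by
            field_simp
        _ ≤ _ := h'
    nlinarith [hω, hr2N]
  have hlogsplit : Real.log (R / r₁) - Real.log (R / r₂) = Real.log (r₂ / r₁) := by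
    rw [Real.log_div hR.ne' h1.ne', Real.log_div hR.ne' h2pos.ne',
      Real.log_div h2pos.ne' h1.ne']
    ring
  have : ω * (r₂ ^ (N:ℝ) - r₁ ^ (N:ℝ)) / ((N:ℝ) * ω * r₂ ^ (N:ℝ) * a)
      = (ω * (r₂ ^ (N:ℝ) - r₁ ^ (N:ℝ)) / ((N:ℝ) * ω * r₂ ^ (N:ℝ))) / a := by
    rw [div_div]
  rw [this, ← add_div, div_le_div_iff_of_pos_right hapos] at *
  linarith
end
end
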